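/- arXiv:1804.07456 — 2 statements merged into one kernel-verified Lean document; each statement's English description precedes it below -/
import Mathlib

section
/- Let (X, d_X) be a metric space admitting a (t, Δ, δ)-decomposition, and let N ⊆ X with |N| = n ≥ 2. Then there exists a set {P_1, ..., P_φ} of t·Δ-bounded partitions of N, where φ = ⌈(2 ln n)/δ⌉, such that every pair x, y ∈ N with d_X(x,y) ≤ Δ is clustered together (i.e., lies in the same cluster) by at least one of the partitions P_i. -/
open MeasureTheory

noncomputable section

/-- The distance function on unordered pairs of points. -/
def symDist {X : Type*} [MetricSpace X] : Sym2 X → ℝ :=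
  Sym2.lift ⟨fun a b => dist a b, fun a b => dist_comm a b⟩

/-- The weight of a walk: the sum of the metric distances along its edges. -/
def walkWeight {X : Type*} [MetricSpace X] {G : SimpleGraph X} {u v : X}
    (p : G.Walk u v) : ℝ :=
  (p.edges.map symDist).sum

/-- Shortest-path distance in a graph whose edges are weighted by the metric. -/
def spannerDist {X : Type*} [MetricSpace X] (G : SimpleGraph X) (u v : X) : ℝ :=
  sInf {c | ∃ p : G.Walk u v, walkWeight p = c}

/-- `G` is a `t`-spanner of the metric space `X`. -/
def IsSpanner {X : Type*} [MetricSpace X] (G : SimpleGraph X) (t : ℝ) : Prop :=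
  ∀ u v : X, dist u v ≤ spannerDist G u v ∧ spannerDist G u v ≤ t * dist u v

/-- Total weight of a graph over a finite metric space. -/
def graphWeight {X : Type*} [MetricSpace X] [Fintype X] (G : SimpleGraph X) : ℝ :=
  ∑ e ∈ G.edgeSet.toFinite.toFinset, symDist e

/-- Number of edges of a graph. -/
def edgeCount {X : Type*} (G : SimpleGraph X) : ℕ :=
  Nat.card G.edgeSet

/-- Weight of a minimum spanning tree of a finite metric space: the minimum total
weight of a connected graph on `X`. -/
def mstWeight (X : Type*) [MetricSpace X] [Fintype X] : ℝ :=
  sInf {c | ∃ G : SimpleGraph X, G.Connected ∧ graphWeight G = c}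

/-- `D` is a `(t, Δ, δ)`-decomposition of the metric space `X`. -/
def IsDecomposition {X : Type*} [MetricSpace X] (t Δ δ : ℝ) (D : PMF (Setoid X)) : Prop :=
  (∀ P ∈ D.support, ∀ x y : X, P.r x y → dist x y ≤ t * Δ) ∧
  (∀ x y : X, dist x y ≤ Δ → ENNReal.ofReal δ ≤ D.toOuterMeasure {P | P.r x y})

/-- A metric space `X` is `(t, δ)`-decomposable. -/
def IsDecomposable (X : Type*) [MetricSpace X] (t δ : ℝ) : Prop :=
  ∀ Δ : ℝ, 0 < Δ → ∃ D : PMF (Setoid X), IsDecomposition t Δ δ D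

/-- `X` has doubling constant `lam`. -/
def HasDoublingConstant (X : Type*) [MetricSpace X] (lam : ℕ) : Prop :=
  ∀ (x : X) (r : ℝ), 0 < r → ∃ F : Finset X, F.card ≤ lam ∧
    Metric.closedBall x (2 * r) ⊆ ⋃ y ∈ F, Metric.closedBall y r

/-- Weight of a walk in a weighted graph. -/
def wWalkWeight {V : Type*} {G : SimpleGraph V} (w : Sym2 V → ℝ) {u v : V}
    (p : G.Walk u v) : ℝ :=
  (p.edges.map w).sum

/-- Shortest-path distance in a weighted graph. -/
def wDist {V : Type*} (G : SimpleGraph V) (w : Sym2 V → ℝ) (u v : V) : ℝ :=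
  sInf {c | ∃ p : G.Walk u v, wWalkWeight w p = c}

/-- Total edge weight of a weighted graph. -/
def wGraphWeight {V : Type*} [Fintype V] (G : SimpleGraph V) (w : Sym2 V → ℝ) : ℝ :=
  ∑ e ∈ G.edgeSet.toFinite.toFinset, w e

/-- Weight of a minimum spanning tree of a weighted graph `G`: the least total weight
of a connected spanning subgraph of `G`. -/
def wMstWeight {V : Type*} [Fintype V] (G : SimpleGraph V) (w : Sym2 V → ℝ) : ℝ :=
  sInf {c | ∃ T : SimpleGraph V, T ≤ G ∧ T.Connected ∧ wGraphWeight T w = c}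

/-- The setoid of elements lying on the same cycle of a permutation. -/
def sameCycleSetoid {α : Type*} (σ : Equiv.Perm α) : Setoid α :=
  ⟨σ.SameCycle, ⟨fun x => Equiv.Perm.SameCycle.refl σ x,
    fun h => h.symm, fun h₁ h₂ => h₁.trans h₂⟩⟩

/-- The number of cycles (orbits) of a permutation. -/
def numCycles {α : Type*} (σ : Equiv.Perm α) : ℕ :=
  Nat.card (Quotient (sameCycleSetoid σ))

/-- The dart-reversal permutation of a graph. -/
def dartReversal {V : Type*} (G : SimpleGraph V) : Equiv.Perm G.Dart :=
  Function.Involutive.toPerm SimpleGraph.Dart.symm SimpleGraph.Dart.symm_involutive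

/-- `σ` is a rotation system of `G`: it permutes darts, preserves tails, and is a single
cycle on the darts emanating from each fixed vertex. -/
def IsRotationSystem {V : Type*} (G : SimpleGraph V) (σ : Equiv.Perm G.Dart) : Prop :=
  (∀ d : G.Dart, (σ d).toProd.1 = d.toProd.1) ∧
  (∀ d e : G.Dart, d.toProd.1 = e.toProd.1 → σ.SameCycle d e)

/-- `G` has (orientable) genus at most `g`: some rotation system, whose number of faces
is the number of cycles of the face permutation `σ * dartReversal G`, satisfies Euler's
formula `V - E + F ≥ 2 - 2g`. -/
def GenusLE {V : Type*} [Fintype V] (G : SimpleGraph V) (g : ℕ) : Prop :=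
  ∃ σ : Equiv.Perm G.Dart, IsRotationSystem G σ ∧
    (2 : ℤ) - 2 * (g : ℤ) ≤
      (Fintype.card V : ℤ) - (Nat.card G.edgeSet : ℤ) + (numCycles (σ * dartReversal G) : ℤ)

/-- `D` is a `(t, Δ, δ)`-strong-decomposition of the weighted graph `(G, w)`: clusters
have strong diameter at most `t·Δ`, and pairs at distance at most `Δ` are clustered
together with probability at least `δ`. -/
def IsStrongDecomposition {V : Type*} (G : SimpleGraph V) (w : Sym2 V → ℝ)
    (t Δ δ : ℝ) (D : PMF (Setoid V)) : Prop :=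
  (∀ P ∈ D.support, ∀ u v : V, P.r u v →
      ∃ p : G.Walk u v, (∀ z ∈ p.support, P.r u z) ∧ wWalkWeight w p ≤ t * Δ) ∧
  (∀ u v : V, wDist G w u v ≤ Δ → ENNReal.ofReal δ ≤ D.toOuterMeasure {P | P.r u v})

/-- A weighted graph is `(t, δ)`-strongly-decomposable. -/
def IsStronglyDecomposable {V : Type*} (G : SimpleGraph V) (w : Sym2 V → ℝ)
    (t δ : ℝ) : Prop :=
  ∀ Δ : ℝ, 0 < Δ → ∃ D : PMF (Setoid V), IsStrongDecomposition G w t Δ δ D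

/-- `D` is an `(r, cr, p₁, p₂)`-sensitive LSH family for `X`. -/
def IsLSHFamily {X : Type*} {U : Type*} [MetricSpace X] (D : PMF (X → U))
    (r cr p₁ p₂ : ℝ) : Prop :=
  (∀ x y : X, dist x y ≤ r → ENNReal.ofReal p₁ ≤ D.toOuterMeasure {h | h x = h y}) ∧
  (∀ x y : X, cr < dist x y → D.toOuterMeasure {h | h x = h y} ≤ ENNReal.ofReal p₂)

end

/-!
A random partition drawn from `D` clusters each pair at distance at most `Δ` with probability at
least `δ`, so by averaging some partition in the support of `D` clusters at least a `δ`-fraction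
of any given finite set of such pairs. Choosing partitions greedily, after `k` rounds at most
`(1 - δ)ᵏ n² < e^{-δk} n²` of the `≤ n²` close pairs of `N` are left unclustered, and this is
below `1` once `k ≥ 2 ln n / δ`.
-/

open Finset
open scoped ENNReal

namespace PMF

variable {α β : Type*}

-- `hc` cannot be dropped: `f` may be finite everywhere and still have infinite mean.
theorem exists_mem_support_le_of_le_tsum (p : PMF α) {f : α → ℝ≥0∞} {c : ℝ≥0∞}
    (hc : c ≠ ∞) (h : c ≤ ∑' a, p a * f a) : ∃ a ∈ p.support, c ≤ f a := by
  by_contra! hlt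
  obtain ⟨a₀, ha₀⟩ := p.support_nonempty
  have hle : ∀ a, p a * f a ≤ p a * c := fun a => by
    by_cases ha : a ∈ p.support
    · exact mul_le_mul_right (hlt a ha).le _
    · simp [(p.mem_support_iff a).not_left.1 ha]
  have hlt_sum : ∑' a, p a * f a < ∑' a, p a * c := by
    refine ENNReal.tsum_lt_tsum (i := a₀) ?_ hle ?_
    · exact ne_top_of_le_ne_top (by rwa [ENNReal.tsum_mul_right, p.tsum_coe, one_mul])
        (ENNReal.tsum_le_tsum hle)
    · exact ENNReal.mul_lt_mul_right ((p.mem_support_iff a₀).1 ha₀) (p.apply_ne_top a₀)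
        (hlt a₀ ha₀)
  rw [ENNReal.tsum_mul_right, p.tsum_coe, one_mul] at hlt_sum
  exact (h.trans_lt hlt_sum).false

theorem sum_toOuterMeasure_eq_tsum_mul_card (p : PMF α) (S : Finset β) (E : β → α → Prop)
    [∀ b a, Decidable (E b a)] :
    ∑ b ∈ S, p.toOuterMeasure {a | E b a} = ∑' a, p a * #(S.filter fun b => E b a) := by
  simp only [toOuterMeasure_apply]
  rw [← Summable.tsum_finsetSum fun _ _ => ENNReal.summable]
  refine tsum_congr fun a => ?_
  simp only [Set.indicator_apply, Set.mem_ofPred_eq]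
  rw [Finset.sum_ite, Finset.sum_const, Finset.sum_const_zero, add_zero, nsmul_eq_mul, mul_comm]

theorem exists_mem_support_card_filter_not_le (p : PMF α) (S : Finset β) (E : β → α → Prop)
    [∀ b a, Decidable (E b a)] {δ : ℝ}
    (hδ : ∀ b ∈ S, ENNReal.ofReal δ ≤ p.toOuterMeasure {a | E b a}) :
    ∃ a ∈ p.support, (#(S.filter fun b => ¬E b a) : ℝ) ≤ (1 - δ) * #S := by
  have hsum :
      (#S : ℝ≥0∞) * ENNReal.ofReal δ ≤ ∑' a, p a * #(S.filter fun b => E b a) := by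
    rw [← sum_toOuterMeasure_eq_tsum_mul_card, ← nsmul_eq_mul, ← Finset.sum_const]
    exact Finset.sum_le_sum hδ
  obtain ⟨a, ha, hcover⟩ := p.exists_mem_support_le_of_le_tsum
    (ENNReal.mul_ne_top (ENNReal.natCast_ne_top _) ENNReal.ofReal_ne_top) hsum
  refine ⟨a, ha, ?_⟩
  have hcover_real : δ * #S ≤ #(S.filter fun b => E b a) := by
    have := ENNReal.toReal_mono (ENNReal.natCast_ne_top _) hcover
    rw [ENNReal.toReal_mul, ENNReal.toReal_ofReal', ENNReal.toReal_natCast,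
      ENNReal.toReal_natCast] at this
    nlinarith [le_max_left δ 0, (#S).cast_nonneg (α := ℝ)]
  have hsplit := S.card_filter_add_card_filter_not (fun b => E b a)
  have : (#(S.filter fun b => E b a) : ℝ) + #(S.filter fun b => ¬E b a) = #S := by
    exact_mod_cast hsplit
  linarith

end PMF

theorem exists_fin_card_filter_forall_not_le_pow {α β : Type*} {S : Finset β}
    {E : β → α → Prop} [∀ b a, Decidable (E b a)] {A : Set α} {r : ℝ} (hr : 0 ≤ r)
    (step : ∀ T ⊆ S, ∃ a ∈ A, (#(T.filter fun b => ¬E b a) : ℝ) ≤ r * #T) (k : ℕ) :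
    ∃ Q : Fin k → α, (∀ i, Q i ∈ A) ∧
      (#(S.filter fun b => ∀ i, ¬E b (Q i)) : ℝ) ≤ r ^ k * #S := by
  induction k with
  | zero => exact ⟨finZeroElim, finZeroElim, by simp⟩
  | succ k ih =>
    obtain ⟨Q, hQA, hQ⟩ := ih
    set U := S.filter fun b => ∀ i, ¬E b (Q i)
    obtain ⟨a, haA, ha⟩ := step U (filter_subset _ _)
    set Q' : Fin (k + 1) → α := Fin.snoc Q a
    refine ⟨Q', Fin.lastCases (by simpa [Q'] using haA) (by simpa [Q'] using hQA), ?_⟩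
    have hU : (S.filter fun b => ∀ i, ¬E b (Q' i)) = U.filter fun b => ¬E b a := by
      ext b
      simp [U, Q', Fin.forall_fin_succ', and_assoc]
    calc (#(S.filter fun b => ∀ i, ¬E b (Q' i)) : ℝ)
        ≤ r * #U := hU ▸ ha
      _ ≤ r * (r ^ k * #S) := mul_le_mul_of_nonneg_left hQ hr
      _ = r ^ (k + 1) * #S := by ring

theorem one_sub_pow_ceil_mul_sq_lt_one {δ x : ℝ} (hδ0 : 0 < δ) (hδ1 : δ ≤ 1) (hx : 1 < x) :
    (1 - δ) ^ ⌈2 * Real.log x / δ⌉₊ * x ^ 2 < 1 := by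
  set φ := ⌈2 * Real.log x / δ⌉₊
  have hlog : 0 < Real.log x := Real.log_pos hx
  have hφ0 : φ ≠ 0 := (Nat.ceil_pos.2 (by positivity)).ne'
  have hφ : 2 * Real.log x ≤ δ * φ := by
    have := (div_le_iff₀ hδ0).1 (Nat.le_ceil (2 * Real.log x / δ))
    linarith
  have hpow : (1 - δ) ^ φ < Real.exp (-(δ * φ)) := by
    rw [show -(δ * φ) = φ * -δ by ring, Real.exp_nat_mul]
    exact pow_lt_pow_left₀ (Real.one_sub_lt_exp_neg hδ0.ne') (sub_nonneg.2 hδ1) hφ0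
  have hsq : x ^ 2 ≤ Real.exp (δ * φ) := by
    rw [← Real.exp_log (by positivity : 0 < x ^ 2), Real.log_pow]
    exact Real.exp_le_exp.2 (by push_cast; linarith)
  calc (1 - δ) ^ φ * x ^ 2 < Real.exp (-(δ * φ)) * Real.exp (δ * φ) :=
        mul_lt_mul hpow hsq (by positivity) (Real.exp_pos _).le
    _ = 1 := by rw [← Real.exp_add, neg_add_cancel, Real.exp_zero]

theorem covering_using_decompositions_general
    {X : Type*} [MetricSpace X] (t Δ δ : ℝ)
    (hδ0 : 0 < δ) (hδ1 : δ ≤ 1)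
    (D : PMF (Setoid X)) (hD : IsDecomposition t Δ δ D)
    (N : Set X) (n : ℕ) (hn : Nat.card N = n) (hn2 : 2 ≤ n) :
    ∃ P : Fin ⌈2 * Real.log n / δ⌉₊ → Setoid N,
      (∀ i, ∀ x y : N, (P i).r x y → dist (x : X) (y : X) ≤ t * Δ) ∧
      (∀ x y : N, dist (x : X) (y : X) ≤ Δ → ∃ i, (P i).r x y) := by
  classical
  have : Finite N := Nat.finite_of_card_ne_zero (by omega)
  have := Fintype.ofFinite N
  set S := (univ : Finset (N × N)).filter fun p => dist (p.1 : X) p.2 ≤ Δ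
  obtain ⟨Q, hQD, hQ_uncovered⟩ := exists_fin_card_filter_forall_not_le_pow (S := S)
    (E := fun p (P : Setoid X) => P.r p.1 p.2) (sub_nonneg.2 hδ1)
    (fun T hT => D.exists_mem_support_card_filter_not_le T _
      fun p hp => hD.2 _ _ (mem_filter.1 (hT hp)).2) ⌈2 * Real.log n / δ⌉₊
  have hS : (#S : ℝ) ≤ n ^ 2 := by
    have : #S ≤ n * n := by
      simpa [← hn, Nat.card_eq_fintype_card] using card_le_univ S
    exact_mod_cast sq n ▸ this
  have huncovered : (S.filter fun p => ∀ i, ¬(Q i).r p.1 p.2) = ∅ := by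
    have hlt : (#(S.filter fun p => ∀ i, ¬(Q i).r p.1 p.2) : ℝ) < 1 :=
      calc _ ≤ (1 - δ) ^ ⌈2 * Real.log n / δ⌉₊ * #S := hQ_uncovered
        _ ≤ (1 - δ) ^ ⌈2 * Real.log n / δ⌉₊ * n ^ 2 := by gcongr
        _ < 1 := one_sub_pow_ceil_mul_sq_lt_one hδ0 hδ1 (by exact_mod_cast hn2)
    exact card_eq_zero.1 (Nat.lt_one_iff.1 (by exact_mod_cast hlt))
  refine ⟨fun i => (Q i).comap Subtype.val, fun i x y hxy => hD.1 _ (hQD i) _ _ hxy,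
    fun x y hxy => ?_⟩
  by_contra! hfar
  have : (x, y) ∈ S.filter fun p => ∀ i, ¬(Q i).r p.1 p.2 :=
    mem_filter.2 ⟨mem_filter.2 ⟨mem_univ _, hxy⟩, hfar⟩
  simp [huncovered] at this

/-- If `(X, d)` admits a `(t, Δ, δ)`-decomposition and `N ⊆ X` has `n ≥ 2`
points, then there are `φ = ⌈2 ln n / δ⌉` many `t·Δ`-bounded partitions of `N` such that every
pair `x, y ∈ N` at distance at most `Δ` is clustered together by at least one partition. -/
theorem covering_using_decompositions
    {X : Type*} [MetricSpace X] (t Δ δ : ℝ) (ht : 1 ≤ t) (hΔ : 0 < Δ)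
    (hδ0 : 0 < δ) (hδ1 : δ ≤ 1)
    (D : PMF (Setoid X)) (hD : IsDecomposition t Δ δ D)
    (N : Set X) (n : ℕ) (hn : Nat.card N = n) (hn2 : 2 ≤ n) :
    ∃ P : Fin ⌈2 * Real.log n / δ⌉₊ → Setoid N,
      (∀ i, ∀ x y : N, (P i).r x y → dist (x : X) (y : X) ≤ t * Δ) ∧
      (∀ x y : N, dist (x : X) (y : X) ≤ Δ → ∃ i, (P i).r x y) :=
  covering_using_decompositions_general t Δ δ hδ0 hδ1 D hD N n hn hn2
end

section
/- There are universal constants C, C' ≥ 1 such that for every integer d ≥ 2 and every real t with 2 ≤ t ≤ √(2d/ln d), every finite subset of d-dimensional Euclidean space ℝ^d is (C·t, 2^{-C'·d/t²})-decomposable. -/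
open MeasureTheory

/-!
Random ball carving on a grid. Put `R = 8tΔ` and take the grid `εℤ^d` with `ε√d ≤ Δ/t²`.
Rank the finitely many grid points near `s` uniformly at random and send each point of `s` to
the best-ranked grid point within distance `R` of it, so that clusters have diameter at most
`2R`. Writing `N(z)` for the grid points within `R` of `z`, the best-ranked point of
`N(x) ∪ N(y)` is uniformly distributed on it, and when it lies in `N(x) ∩ N(y)` both `x` and `y`
are sent to it: they share a cluster with probability at least `|N(x) ∩ N(y)| / |N(x) ∪ N(y)|`.

Grid points are counted by the volumes of their cells. The cells of `N(x) ∪ N(y)` lie in two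
balls of radius `R + Δ/t²`. If `|x - y| ≤ Δ` and `e` is the direction of `y - x`, then
`N(x) ∩ N(y)` contains every grid point whose cell meets the ellipsoid with centre `x + 2Δe`,
semi-axis `Δ` along `e` and `R(1 - 1/t²)` across it. The ratio of the two volumes is at least
`e^{-3d/t²}/(18t)`, which is at least `2^{-64d/t²}` as soon as `t² log d ≤ 2d`.
-/

open Finset MeasureTheory
open scoped ENNReal RealInnerProductSpace Pointwise

section RandomRanking

variable {W : Type*}

instance [Fintype W] : Nonempty (W ≃ Fin (Fintype.card W)) := ⟨Fintype.equivFin W⟩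

def firstIn {n : ℕ} (f : W ≃ Fin n) (B : Finset W) (hB : B.Nonempty) : W :=
  f.symm ((B.image f).min' (hB.image f))

variable {n : ℕ} {f : W ≃ Fin n} {A B : Finset W}

theorem firstIn_eq_iff (hB : B.Nonempty) {w : W} :
    firstIn f B hB = w ↔ w ∈ B ∧ ∀ b ∈ B, f w ≤ f b := by
  rw [firstIn, Equiv.symm_apply_eq, Finset.min'_eq_iff]
  simp

theorem firstIn_spec (hB : B.Nonempty) :
    firstIn f B hB ∈ B ∧ ∀ b ∈ B, f (firstIn f B hB) ≤ f b :=
  (firstIn_eq_iff hB).1 rfl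

theorem firstIn_of_subset (hA : A.Nonempty) (hB : B.Nonempty) (hAB : A ⊆ B)
    (h : firstIn f B hB ∈ A) : firstIn f A hA = firstIn f B hB :=
  (firstIn_eq_iff hA).2 ⟨h, fun a ha => (firstIn_spec hB).2 a (hAB ha)⟩

variable [DecidableEq W]

theorem firstIn_swap_trans (hB : B.Nonempty) {b b' : W} (hb : b ∈ B) (hb' : b' ∈ B) :
    firstIn ((Equiv.swap b b').trans f) B hB = Equiv.swap b b' (firstIn f B hB) := by
  have hswap := (Equiv.swap_bijOn_self (s := (B : Set W)) (iff_of_true hb hb')).mapsTo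
  obtain ⟨hmem, hmin⟩ := firstIn_spec (f := f) hB
  refine (firstIn_eq_iff hB).2 ⟨hswap hmem, fun z hz => ?_⟩
  simpa using hmin _ (hswap hz)

variable [Fintype W]

theorem card_firstIn_eq_eq (hB : B.Nonempty) {b b' : W} (hb : b ∈ B) (hb' : b' ∈ B) :
    #{f : W ≃ Fin n | firstIn f B hB = b} = #{f : W ≃ Fin n | firstIn f B hB = b'} := by
  refine card_nbij' ((Equiv.swap b b').trans ·) ((Equiv.swap b b').trans ·) ?_ ?_ ?_ ?_ <;>
    intro f hf
  · simp_all [firstIn_swap_trans hB hb hb']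
  · simp_all [firstIn_swap_trans hB hb hb']
  · ext; simp
  · ext; simp

theorem card_firstIn_mem (hB : B.Nonempty) {C : Finset W} (hCB : C ⊆ B) {b₀ : W}
    (hb₀ : b₀ ∈ B) :
    #{f : W ≃ Fin n | firstIn f B hB ∈ C} = #C * #{f : W ≃ Fin n | firstIn f B hB = b₀} := by
  rw [card_eq_sum_card_fiberwise (s := {f : W ≃ Fin n | firstIn f B hB ∈ C}) (t := C)
    (f := fun f => firstIn f B hB) fun f hf => by simpa using hf, ← smul_eq_mul, ← sum_const]
  refine sum_congr rfl fun b hb => ?_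
  rw [← card_firstIn_eq_eq hB (hCB hb) hb₀, filter_filter]
  congr 1; ext f
  simp only [mem_filter, mem_univ, true_and, and_iff_right_iff_imp]
  rintro rfl; exact hb

theorem toOuterMeasure_firstIn_mem (hB : B.Nonempty) (hAB : A ⊆ B) :
    (PMF.uniformOfFintype (W ≃ Fin (Fintype.card W))).toOuterMeasure
      {f | firstIn f B hB ∈ A} = #A / #B := by
  obtain ⟨b₀, hb₀⟩ := id hB
  set k := #{f : W ≃ Fin (Fintype.card W) | firstIn f B hB = b₀}
  have hΩ : Fintype.card (W ≃ Fin (Fintype.card W)) = #B * k := by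
    rw [← card_firstIn_mem hB subset_rfl hb₀]
    simp [(firstIn_spec _).1]
  have hk : k ≠ 0 := by
    have := hΩ ▸ Fintype.card_pos (α := W ≃ Fin (Fintype.card W))
    exact (pos_of_mul_pos_right this (Nat.zero_le _)).ne'
  rw [PMF.toOuterMeasure_uniformOfFintype_apply, Fintype.card_subtype]
  simp only [Set.mem_ofPred_eq]
  rw [card_firstIn_mem hB hAB hb₀, hΩ]
  push_cast
  exact ENNReal.mul_div_mul_right _ _ (by exact_mod_cast hk) (by simp)

end RandomRanking

theorem exists_isDecomposition_of_centers {X ι : Type*} [MetricSpace X] [DecidableEq ι]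
    (s : Set X) (M : Finset ι) (c : ι → X) {R t Δ δ : ℝ} (hR : 2 * R ≤ t * Δ)
    (hcover : ∀ x ∈ s, ∃ i ∈ M, dist (c i) x ≤ R)
    (hratio : ∀ x ∈ s, ∀ y ∈ s, dist x y ≤ Δ →
      δ * #{i ∈ M | dist (c i) x ≤ R ∨ dist (c i) y ≤ R} ≤
        #{i ∈ M | dist (c i) x ≤ R ∧ dist (c i) y ≤ R}) :
    ∃ D : PMF (Setoid s), IsDecomposition t Δ δ D := by
  classical
  let ball (x : s) : Finset M := {i | dist (c i) x ≤ R}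
  have hball (x : s) : (ball x).Nonempty := by
    obtain ⟨i, hi, hix⟩ := hcover x x.2
    exact ⟨⟨i, hi⟩, by simpa [ball] using hix⟩
  let cluster (f : M ≃ Fin (Fintype.card M)) : Setoid s :=
    Setoid.ker fun x => firstIn f (ball x) (hball x)
  refine ⟨(PMF.uniformOfFintype _).map cluster, ?_, fun x y hxy => ?_⟩
  · rintro P hP x y hxy
    obtain ⟨f, -, rfl⟩ := (PMF.support_map _ _ ▸ hP : P ∈ cluster '' _)
    have hx := (firstIn_spec (f := f) (hball x)).1
    have hy := (firstIn_spec (f := f) (hball y)).1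
    simp only [ball, mem_filter, mem_univ, true_and] at hx hy
    rw [show firstIn f (ball x) _ = _ from hxy] at hx
    rw [Subtype.dist_eq]
    linarith [dist_triangle_left (x : X) y (c ((firstIn f (ball y) (hball y) : M) : ι))]
  · have hcard (p : ι → Prop) [DecidablePred p] : #{i : M | p i} = #{i ∈ M | p i} := by
      rw [univ_eq_attach, filter_attach, card_map, card_attach]
    have hB : (ball x ∪ ball y).Nonempty := (hball x).mono subset_union_left
    have hδ : ENNReal.ofReal δ ≤ #(ball x ∩ ball y) / #(ball x ∪ ball y) := by
      rw [ENNReal.ofReal_le_iff_le_toReal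
          (ENNReal.div_ne_top (by simp) (by simpa using hB.ne_empty)),
        ENNReal.toReal_div, ENNReal.toReal_natCast, ENNReal.toReal_natCast,
        le_div_iff₀ (by simpa using hB), ← filter_or, ← filter_and]
      have h := hratio x x.2 y y.2 hxy
      rwa [← hcard, ← hcard] at h
    have hsame : {f | firstIn f _ hB ∈ ball x ∩ ball y} ⊆ cluster ⁻¹' {P | P.r x y} := by
      intro f hf
      rw [Set.mem_ofPred_eq, mem_inter] at hf
      show firstIn f (ball x) _ = firstIn f (ball y) _
      rw [firstIn_of_subset _ hB subset_union_left hf.1,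
        firstIn_of_subset _ hB subset_union_right hf.2]
    calc ENNReal.ofReal δ ≤ #(ball x ∩ ball y) / #(ball x ∪ ball y) := hδ
      _ = _ := (toOuterMeasure_firstIn_mem hB inter_subset_union).symm
      _ ≤ _ := (PMF.uniformOfFintype _).toOuterMeasure.mono hsame
      _ = _ := (PMF.toOuterMeasure_map_apply _ _ _).symm

theorem LinearMap.det_id_add_smulRight {R M : Type*} [CommRing R] [AddCommGroup M] [Module R M]
    [Module.Free R M] [Module.Finite R M] (f : M →ₗ[R] R) (x : M) :
    LinearMap.det (LinearMap.id + f.smulRight x) = 1 + f x := by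
  classical
  set b := Module.Free.chooseBasis R M
  rw [← LinearMap.det_toMatrix b, map_add, LinearMap.toMatrix_id, LinearMap.toMatrix_smulRight,
    Matrix.vecMulVec_eq (Fin 1), Matrix.det_one_add_replicateCol_mul_replicateRow]
  have hx := congrArg f (b.sum_repr x)
  simp only [map_sum, map_smul, smul_eq_mul] at hx
  simp [dotProduct, mul_comm, hx]

noncomputable section Ellipsoid

variable {F : Type*} [NormedAddCommGroup F] [InnerProductSpace ℝ F]

theorem norm_sub_smul_le_of_le_two_inner {v e : F} {a R : ℝ} (he : ‖e‖ = 1) (ha : 0 ≤ a)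
    (hv : ‖v‖ ≤ R) (hva : a ≤ 2 * ⟪v, e⟫) : ‖v - a • e‖ ≤ R := by
  have hsq : ‖v - a • e‖ ^ 2 ≤ ‖v‖ ^ 2 := by
    rw [norm_sub_sq_real, real_inner_smul_right, norm_smul, he, Real.norm_eq_abs, mul_one,
      sq_abs]
    nlinarith
  exact (pow_le_pow_iff_left₀ (norm_nonneg _) ((norm_nonneg _).trans hv) two_ne_zero).1
    (hsq.trans (pow_le_pow_left₀ (norm_nonneg _) hv 2))

theorem dist_le_of_le_inner {x p q e : F} {a Δ η R : ℝ} (he : ‖e‖ = 1) (ha : 0 ≤ a)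
    (haΔ : a ≤ Δ) (hη : 2 * η ≤ Δ) (hp : ‖p - x‖ ≤ R - η) (hpe : Δ ≤ ⟪p - x, e⟫)
    (hq : dist q p ≤ η) : dist q x ≤ R ∧ dist q (x + a • e) ≤ R := by
  rw [dist_eq_norm] at hq
  have hsplit : q - x = (q - p) + (p - x) := by abel
  have hqx : ‖q - x‖ ≤ R := (hsplit ▸ norm_add_le _ _).trans (by linarith)
  have hqe : -η ≤ ⟪q - p, e⟫ := by
    have := abs_real_inner_le_norm (q - p) e
    rw [he, mul_one] at this
    linarith [(abs_le.1 this).1]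
  have hqe' : a ≤ 2 * ⟪q - x, e⟫ := by rw [hsplit, inner_add_left]; linarith
  refine ⟨by rwa [dist_eq_norm], ?_⟩
  rw [dist_eq_norm, ← sub_sub]
  exact norm_sub_smul_le_of_le_two_inner he ha hqx hqe'

theorem exists_norm_eq_one_smul_eq [Nontrivial F] (v : F) : ∃ e : F, ‖e‖ = 1 ∧ ‖v‖ • e = v := by
  rcases eq_or_ne v 0 with rfl | hv
  · obtain ⟨e, he⟩ := exists_norm_eq F zero_le_one
    exact ⟨e, he, by simp⟩
  · exact ⟨‖v‖⁻¹ • v, norm_smul_inv_norm hv, by simp [smul_smul, hv]⟩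

/-- Scaling by `a` along the unit vector `e` and by `b` on its orthogonal complement. -/
def axialScale (e : F) (a b : ℝ) : F →ₗ[ℝ] F :=
  b • LinearMap.id + (a - b) • (innerₛₗ ℝ e).smulRight e

theorem axialScale_apply (e v : F) (a b : ℝ) :
    axialScale e a b v = b • v + ((a - b) * ⟪e, v⟫) • e := by
  simp [axialScale, smul_smul]

theorem det_axialScale [FiniteDimensional ℝ F] {e : F} (he : ‖e‖ = 1) (a : ℝ) {b : ℝ}
    (hb : b ≠ 0) : LinearMap.det (axialScale e a b) = a * b ^ (Module.finrank ℝ F - 1) := by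
  have hF : Nontrivial F := nontrivial_of_ne e 0 (by simp [← norm_ne_zero_iff, he])
  obtain ⟨n, hn⟩ := Nat.exists_eq_add_one.2 (Module.finrank_pos (R := ℝ) (M := F))
  have hsplit : axialScale e a b =
      b • (LinearMap.id + (((a - b) / b) • innerₛₗ ℝ e).smulRight e) := by
    ext v; simp only [axialScale]; simp [smul_smul]; field_simp
  rw [hsplit, LinearMap.det_smul, LinearMap.det_id_add_smulRight, hn, Nat.add_sub_cancel]
  simp only [LinearMap.smul_apply, innerₛₗ_apply_apply, real_inner_self_eq_norm_sq, he]
  rw [pow_succ, one_pow, smul_eq_mul, mul_one, mul_assoc, mul_add, mul_one,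
    mul_div_cancel₀ _ hb]
  ring

theorem ellipsoid_mem_cap {e v : F} (he : ‖e‖ = 1) {h β : ℝ} (hh : 0 ≤ h) (hv : ‖v‖ ≤ 1) :
    ‖(2 * h) • e + axialScale e h β v‖ ^ 2 ≤ 9 * h ^ 2 + β ^ 2 ∧
      h ≤ ⟪(2 * h) • e + axialScale e h β v, e⟫ := by
  have hee : ⟪e, e⟫ = 1 := by rw [real_inner_self_eq_norm_sq, he, one_pow]
  have hw : |⟪e, v⟫| ≤ 1 := by
    simpa [he] using (abs_real_inner_le_norm e v).trans (by simpa [he] using hv)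
  rw [abs_le] at hw
  have hq : (2 * h) • e + axialScale e h β v =
      (2 * h + h * ⟪e, v⟫ - β * ⟪e, v⟫) • e + β • v := by
    rw [axialScale_apply]; module
  rw [hq]
  constructor
  · rw [norm_add_sq_real, norm_smul, norm_smul, real_inner_smul_left, real_inner_smul_right, he,
      Real.norm_eq_abs, Real.norm_eq_abs, mul_one, sq_abs, mul_pow, sq_abs]
    have hv2 : β ^ 2 * ‖v‖ ^ 2 ≤ β ^ 2 :=
      mul_le_of_le_one_right (sq_nonneg β) (pow_le_one₀ (norm_nonneg v) hv)
    have hc : (2 * h + h * ⟪e, v⟫) ^ 2 ≤ 9 * h ^ 2 := by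
      nlinarith [mul_nonneg (mul_nonneg hh (sub_nonneg.2 hw.2))
        (mul_nonneg hh (by linarith : 0 ≤ 5 + ⟪e, v⟫))]
    nlinarith [sq_nonneg (β * ⟪e, v⟫)]
  · rw [inner_add_left, real_inner_smul_left, real_inner_smul_left, hee, real_inner_comm e v]
    nlinarith

theorem le_addHaar_cap [FiniteDimensional ℝ F] [MeasurableSpace F] [BorelSpace F]
    (μ : Measure F) [μ.IsAddHaarMeasure] (x : F) {e : F} (he : ‖e‖ = 1) {h β r : ℝ} (hh : 0 ≤ h)
    (hβ : 0 < β) (hr : 0 ≤ r) (hhβr : 9 * h ^ 2 + β ^ 2 ≤ r ^ 2) :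
    ENNReal.ofReal (h * β ^ (Module.finrank ℝ F - 1)) * μ (Metric.ball 0 1) ≤
      μ {p | ‖p - x‖ ≤ r ∧ h ≤ ⟪p - x, e⟫} := by
  have hF : Nontrivial F := nontrivial_of_ne e 0 (by simp [← norm_ne_zero_iff, he])
  have hsub : (x + (2 * h) • e) +ᵥ axialScale e h β '' Metric.closedBall 0 1 ⊆
      {p | ‖p - x‖ ≤ r ∧ h ≤ ⟪p - x, e⟫} := by
    rintro _ ⟨_, ⟨v, hv, rfl⟩, rfl⟩
    have hp : x + (2 * h) • e + axialScale e h β v - x = (2 * h) • e + axialScale e h β v := by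
      abel
    obtain ⟨hnorm, hinner⟩ := ellipsoid_mem_cap (β := β) he hh (mem_closedBall_zero_iff.1 hv)
    refine ⟨?_, by simpa [hp] using hinner⟩
    simpa [hp] using (pow_le_pow_iff_left₀ (norm_nonneg _) hr two_ne_zero).1 (hnorm.trans hhβr)
  refine le_trans (le_of_eq ?_) (measure_mono hsub)
  rw [measure_vadd, Measure.addHaar_image_linearMap, det_axialScale he h hβ.ne',
    abs_of_nonneg (by positivity), Measure.addHaar_closedBall_eq_addHaar_ball]

end Ellipsoid

noncomputable section Lattice

variable {d : ℕ} {ε : ℝ}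

theorem EuclideanSpace.dist_le_mul_sqrt_of_forall_dist_apply_le
    {p q : EuclideanSpace ℝ (Fin d)} {r : ℝ} (hr : 0 ≤ r) (h : ∀ i, dist (p i) (q i) ≤ r) :
    dist p q ≤ r * √d := by
  rw [EuclideanSpace.dist_eq, ← Real.sqrt_sq hr, ← Real.sqrt_mul (sq_nonneg r), mul_comm]
  gcongr
  simpa using Finset.sum_le_card_nsmul univ _ _ fun i _ =>
    pow_le_pow_left₀ dist_nonneg (h i) 2

def latticePoint (ε : ℝ) (k : Fin d → ℤ) : EuclideanSpace ℝ (Fin d) :=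
  WithLp.toLp 2 fun i => ε * k i

def latticeIndex (ε : ℝ) (p : EuclideanSpace ℝ (Fin d)) : Fin d → ℤ :=
  fun i => ⌊p i / ε⌋

theorem latticeIndex_preimage_singleton (hε : 0 < ε) (k : Fin d → ℤ) :
    latticeIndex ε ⁻¹' {k} = (MeasurableEquiv.toLp 2 (Fin d → ℝ)).symm ⁻¹'
      Set.univ.pi fun i => Set.Ico (ε * k i) (ε * k i + ε) := by
  ext p
  simp only [Set.mem_preimage, Set.mem_singleton_iff, funext_iff, latticeIndex, Int.floor_eq_iff,
    le_div_iff₀ hε, div_lt_iff₀ hε, Set.mem_pi, Set.mem_univ, true_imp_iff, Set.mem_Ico]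
  simp [mul_comm, mul_add]

theorem volume_latticeIndex_preimage_singleton (hε : 0 < ε) (k : Fin d → ℤ) :
    volume (latticeIndex ε ⁻¹' {k}) = ENNReal.ofReal (ε ^ d) := by
  rw [latticeIndex_preimage_singleton hε,
    (EuclideanSpace.volume_preserving_symm_measurableEquiv_toLp _).measure_preimage
      (MeasurableSet.univ_pi fun _ => measurableSet_Ico).nullMeasurableSet, volume_pi_pi]
  simp [Real.volume_Ico, ENNReal.ofReal_pow hε.le]

theorem measurableSet_latticeIndex_preimage_singleton (hε : 0 < ε) (k : Fin d → ℤ) :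
    MeasurableSet (latticeIndex ε ⁻¹' {k}) := by
  rw [latticeIndex_preimage_singleton hε]
  exact (MeasurableEquiv.toLp 2 _).symm.measurable
    (MeasurableSet.univ_pi fun _ => measurableSet_Ico)

theorem dist_latticePoint_latticeIndex_le (hε : 0 < ε) (p : EuclideanSpace ℝ (Fin d)) :
    dist p (latticePoint ε (latticeIndex ε p)) ≤ ε * √d := by
  refine EuclideanSpace.dist_le_mul_sqrt_of_forall_dist_apply_le hε.le fun i => ?_
  have h : p ∈ latticeIndex ε ⁻¹' {latticeIndex ε p} := rfl
  rw [latticeIndex_preimage_singleton hε] at h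
  obtain ⟨h₁, h₂⟩ := h i (Set.mem_univ i)
  rw [Real.dist_eq, abs_le]
  constructor <;> simp [latticePoint] at h₁ h₂ ⊢ <;> linarith

theorem volume_le_card_mul {S : Set (EuclideanSpace ℝ (Fin d))} {K : Finset (Fin d → ℤ)}
    (hε : 0 < ε) (hS : ∀ p ∈ S, latticeIndex ε p ∈ K) :
    volume S ≤ #K * ENNReal.ofReal (ε ^ d) :=
  calc volume S ≤ volume (⋃ k ∈ K, latticeIndex ε ⁻¹' {k}) :=
        measure_mono fun p hp => Set.mem_biUnion (hS p hp) rfl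
    _ ≤ ∑ k ∈ K, volume (latticeIndex ε ⁻¹' {k}) := measure_biUnion_finset_le _ _
    _ = #K * ENNReal.ofReal (ε ^ d) := by
        simp [volume_latticeIndex_preimage_singleton hε]

theorem card_mul_le_volume {U : Set (EuclideanSpace ℝ (Fin d))} {K : Finset (Fin d → ℤ)}
    (hε : 0 < ε) (hU : ∀ k ∈ K, latticeIndex ε ⁻¹' {k} ⊆ U) :
    #K * ENNReal.ofReal (ε ^ d) ≤ volume U :=
  calc #K * ENNReal.ofReal (ε ^ d) = ∑ k ∈ K, volume (latticeIndex ε ⁻¹' {k}) := by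
        simp [volume_latticeIndex_preimage_singleton hε]
    _ = volume (⋃ k ∈ K, latticeIndex ε ⁻¹' {k}) :=
        (measure_biUnion_finset (fun k _ l _ hkl => Set.disjoint_singleton.2 hkl |>.preimage _)
          fun k _ => measurableSet_latticeIndex_preimage_singleton hε k).symm
    _ ≤ volume U := measure_mono (Set.iUnion₂_subset hU)

theorem exists_abs_le_of_latticePoint_mem (hε : 0 < ε) {S : Set (EuclideanSpace ℝ (Fin d))}
    (hS : Bornology.IsBounded S) :
    ∃ N : ℕ, ∀ k, latticePoint ε k ∈ S → ∀ i, |k i| ≤ N := by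
  obtain ⟨r, hr⟩ := hS.subset_closedBall 0
  refine ⟨⌈r / ε⌉₊, fun k hk i => ?_⟩
  have h := (PiLp.norm_apply_le (latticePoint ε k) i).trans (mem_closedBall_zero_iff.1 (hr hk))
  simp only [latticePoint, Real.norm_eq_abs, abs_mul, abs_of_pos hε] at h
  exact_mod_cast ((le_div_iff₀' hε).2 h).trans (Nat.le_ceil _)

variable {M : Finset (Fin d → ℤ)} {x y : EuclideanSpace ℝ (Fin d)}

theorem card_or_mul_le (hε : 0 < ε) {R η : ℝ} (hη : ε * √d ≤ η) (hRη : 0 ≤ R + η) :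
    #{k ∈ M | dist (latticePoint ε k) x ≤ R ∨ dist (latticePoint ε k) y ≤ R} *
        ENNReal.ofReal (ε ^ d) ≤
      2 * ENNReal.ofReal ((R + η) ^ d) * volume (Metric.ball (0 : EuclideanSpace ℝ (Fin d)) 1) := by
  refine (card_mul_le_volume hε (U := Metric.closedBall x (R + η) ∪ Metric.closedBall y (R + η))
    fun k hk p hp => ?_).trans ?_
  · have hpk : dist p (latticePoint ε k) ≤ η :=
      hp ▸ (dist_latticePoint_latticeIndex_le hε p).trans hη
    rcases (mem_filter.1 hk).2 with h | h
    · exact Or.inl (Metric.mem_closedBall.2 (by linarith [dist_triangle p (latticePoint ε k) x]))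
    · exact Or.inr (Metric.mem_closedBall.2 (by linarith [dist_triangle p (latticePoint ε k) y]))
  · refine (measure_union_le _ _).trans (le_of_eq ?_)
    rw [Measure.addHaar_closedBall _ _ hRη, Measure.addHaar_closedBall _ _ hRη,
      finrank_euclideanSpace_fin]
    ring

theorem ofReal_mul_le_card_and_mul (hd : 1 ≤ d) (hε : 0 < ε) {R Δ β η : ℝ} (hΔ : 0 ≤ Δ)
    (hβ : 0 < β) (hη : ε * √d ≤ η) (hηΔ : 2 * η ≤ Δ) (hRη : 0 ≤ R - η)
    (hΔβR : 9 * Δ ^ 2 + β ^ 2 ≤ (R - η) ^ 2) (hxy : dist x y ≤ Δ)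
    (hM : ∀ k, dist (latticePoint ε k) x ≤ R → k ∈ M) :
    ENNReal.ofReal (Δ * β ^ (d - 1)) * volume (Metric.ball (0 : EuclideanSpace ℝ (Fin d)) 1) ≤
      #{k ∈ M | dist (latticePoint ε k) x ≤ R ∧ dist (latticePoint ε k) y ≤ R} *
        ENNReal.ofReal (ε ^ d) := by
  have : Nonempty (Fin d) := ⟨⟨0, hd⟩⟩
  obtain ⟨e, he, hye⟩ := exists_norm_eq_one_smul_eq (y - x)
  have hcap := le_addHaar_cap volume x he hΔ hβ hRη hΔβR
  rw [finrank_euclideanSpace_fin] at hcap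
  refine hcap.trans (volume_le_card_mul hε fun p ⟨hp, hpe⟩ => ?_)
  have hq := dist_le_of_le_inner (a := ‖y - x‖) he (norm_nonneg _)
    (by rwa [← dist_eq_norm, dist_comm]) hηΔ hp hpe
    ((dist_comm p _ ▸ dist_latticePoint_latticeIndex_le hε p).trans hη)
  rw [hye, add_sub_cancel] at hq
  simp [hM _ hq.1, hq]

end Lattice

section Numerics

open Real

theorem mul_exp_le_two_rpow {d t : ℝ} (hd : 2 ≤ d) (ht : 2 ≤ t) (htd : t ^ 2 * log d ≤ 2 * d) :
    18 * t * exp (3 * d / t ^ 2) ≤ 2 ^ (64 * d / t ^ 2) := by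
  have ht0 : 0 < t := by linarith
  have hlog2 := log_two_gt_d9
  have hlog2d : log 2 ≤ log d := log_le_log two_pos hd
  have htd' : t ≤ 2 * d := by nlinarith
  have hlogt : log t ≤ log 2 + log d := by
    rw [← log_mul two_ne_zero (by positivity)]; exact log_le_log ht0 htd'
  have hlog18 : log 18 ≤ 5 * log 2 := by
    rw [← log_rpow two_pos]; exact log_le_log (by norm_num) (by norm_num)
  rw [← log_le_log_iff (by positivity) (by positivity), log_mul (by positivity) (by positivity),
    log_mul (by norm_num) ht0.ne', log_exp, log_rpow two_pos, mul_div_assoc, mul_div_assoc]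
  set w := d / t ^ 2
  have hw : log d ≤ 2 * w := by
    rw [mul_div_assoc', le_div_iff₀ (by positivity)]; linarith
  nlinarith

theorem pow_le_mul_exp_of_le_mul_one_add {R β σ : ℝ} {n : ℕ} (hβ : 0 ≤ β) (hR : 0 ≤ R)
    (h : R ≤ β * (1 + σ)) : R ^ n ≤ β ^ n * exp (n * σ) := by
  calc R ^ n ≤ (β * exp σ) ^ n :=
        pow_le_pow_left₀ hR (h.trans (by gcongr; linarith [add_one_le_exp σ])) n
    _ = β ^ n * exp (n * σ) := by rw [mul_pow, ← exp_nat_mul]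

theorem two_rpow_mul_le {d : ℕ} {t Δ : ℝ} (hd : 2 ≤ d) (ht : 2 ≤ t)
    (htd : t ^ 2 * log d ≤ 2 * d) (hΔ : 0 < Δ) :
    2 ^ (-(64 * d / t ^ 2)) * (2 * (8 * t * Δ + Δ / t ^ 2) ^ d) ≤
      Δ * (8 * t * Δ * (1 - 1 / t ^ 2)) ^ (d - 1) := by
  set σ := 1 / t ^ 2 with hσ
  set R₂ := 8 * t * Δ + Δ / t ^ 2
  set β := 8 * t * Δ * (1 - σ)
  have hσ4 : σ ≤ 1 / 4 := by rw [hσ]; gcongr; nlinarith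
  have hΔσ : Δ / t ^ 2 = Δ * σ := by rw [hσ, mul_one_div]
  have hβ : 0 ≤ β := mul_nonneg (by positivity) (by linarith)
  have hR₂ : R₂ ≤ β * (1 + 3 * σ) := by
    have : Δ * σ ≤ 8 * t * Δ * σ * (2 - 3 * σ) := by
      have h1 : 1 ≤ 8 * t * (2 - 3 * σ) := by nlinarith
      nlinarith [mul_le_mul_of_nonneg_left h1 (by positivity : 0 ≤ Δ * σ)]
    simp only [R₂, β, hΔσ]; nlinarith
  have hR₂9 : R₂ ≤ 9 * t * Δ := by
    simp only [R₂, hΔσ]; nlinarith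
  obtain ⟨n, rfl⟩ : ∃ n, d = n + 1 := ⟨d - 1, by omega⟩
  have hexp : exp (n * (3 * σ)) ≤ exp (3 * (n + 1 : ℕ) / t ^ 2) := by
    rw [hσ]; gcongr; push_cast; field_simp; linarith
  have hkey := mul_exp_le_two_rpow (d := (n + 1 : ℕ)) (by exact_mod_cast hd) ht htd
  set x : ℝ := 64 * (n + 1 : ℕ) / t ^ 2
  calc 2 ^ (-x) * (2 * R₂ ^ (n + 1)) = 2 ^ (-x) * (2 * R₂ * R₂ ^ n) := by ring
    _ ≤ 2 ^ (-x) * (2 * (9 * t * Δ) * (β ^ n * exp (3 * (n + 1 : ℕ) / t ^ 2))) := by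
        gcongr
        exact (pow_le_mul_exp_of_le_mul_one_add hβ (by positivity) hR₂).trans (by gcongr)
    _ = 2 ^ (-x) * (Δ * β ^ n * (18 * t * exp (3 * (n + 1 : ℕ) / t ^ 2))) := by ring
    _ ≤ 2 ^ (-x) * (Δ * β ^ n * 2 ^ x) := by gcongr
    _ = Δ * β ^ (n + 1 - 1) := by
        rw [mul_left_comm, ← mul_assoc, mul_assoc, ← rpow_add two_pos]; simp

theorem nine_sq_add_sq_le {t Δ η : ℝ} (ht : 2 ≤ t) (hΔ : 0 < Δ) (hη : η ≤ Δ / t ^ 2) :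
    9 * Δ ^ 2 + (8 * t * Δ * (1 - 1 / t ^ 2)) ^ 2 ≤ (8 * t * Δ - η) ^ 2 := by
  have ht0 : 0 < t := by linarith
  have hexp : (8 * t * Δ * (1 - 1 / t ^ 2)) ^ 2 =
      (8 * t * Δ) ^ 2 - 128 * Δ ^ 2 + 64 * Δ ^ 2 / t ^ 2 := by
    field_simp; ring
  have htη : 16 * t * Δ * η ≤ 8 * Δ ^ 2 := by
    calc 16 * t * Δ * η ≤ 16 * t * Δ * (Δ / t ^ 2) := by gcongr
      _ = 16 * Δ ^ 2 / t := by field_simp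
      _ ≤ 8 * Δ ^ 2 := by rw [div_le_iff₀ ht0]; nlinarith
  have hσ : 64 * Δ ^ 2 / t ^ 2 ≤ 16 * Δ ^ 2 := by
    rw [div_le_iff₀ (by positivity)]
    nlinarith [mul_le_mul_of_nonneg_left (by nlinarith : 4 ≤ t ^ 2) (sq_nonneg Δ)]
  nlinarith [sq_nonneg η]

end Numerics

theorem two_rpow_mul_card_or_le_card_and {d : ℕ} (hd : 2 ≤ d) {t Δ ε : ℝ} (ht : 2 ≤ t)
    (htd : t ^ 2 * Real.log d ≤ 2 * d) (hΔ : 0 < Δ) (hε : 0 < ε) (hεΔ : ε * √d ≤ Δ / t ^ 2)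
    (M : Finset (Fin d → ℤ)) {x y : EuclideanSpace ℝ (Fin d)} (hxy : dist x y ≤ Δ)
    (hM : ∀ k, dist (latticePoint ε k) x ≤ 8 * t * Δ → k ∈ M) :
    (2 : ℝ) ^ (-(64 * d / t ^ 2)) *
        #{k ∈ M | dist (latticePoint ε k) x ≤ 8 * t * Δ ∨ dist (latticePoint ε k) y ≤ 8 * t * Δ} ≤
      #{k ∈ M | dist (latticePoint ε k) x ≤ 8 * t * Δ ∧ dist (latticePoint ε k) y ≤ 8 * t * Δ} := by
  have hηΔ : 2 * (Δ / t ^ 2) ≤ Δ := by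
    rw [mul_div_assoc', div_le_iff₀ (by positivity)]
    nlinarith [mul_le_mul_of_nonneg_left (by nlinarith : 4 ≤ t ^ 2) hΔ.le]
  have hβ : 0 < 8 * t * Δ * (1 - 1 / t ^ 2) := mul_pos (by positivity) (by
    have : 1 / t ^ 2 < 1 := by rw [div_lt_one (by positivity)]; nlinarith
    linarith)
  have hA := ofReal_mul_le_card_and_mul (by omega) hε hΔ.le hβ hεΔ hηΔ (by nlinarith)
    (nine_sq_add_sq_le ht hΔ le_rfl) hxy hM
  have hB := card_or_mul_le (M := M) (x := x) (y := y) (R := 8 * t * Δ) hε hεΔ (by positivity)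
  have hεd : ENNReal.ofReal (ε ^ d) ≠ 0 := by simpa using pow_pos hε d
  rw [← ENNReal.ofReal_le_ofReal_iff (by positivity), ENNReal.ofReal_mul (by positivity),
    ENNReal.ofReal_natCast, ENNReal.ofReal_natCast,
    ← ENNReal.mul_le_mul_iff_left hεd ENNReal.ofReal_ne_top]
  refine le_trans ?_ hA
  rw [mul_assoc]
  grw [hB, ← two_rpow_mul_le hd ht htd hΔ]
  rw [ENNReal.ofReal_mul (by positivity), ENNReal.ofReal_mul (by positivity)]
  simp [mul_assoc]

theorem exists_isDecomposition_euclidean {d : ℕ} (hd : 2 ≤ d) {t Δ : ℝ} (ht : 2 ≤ t)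
    (htd : t ^ 2 * Real.log d ≤ 2 * d) (hΔ : 0 < Δ) {s : Set (EuclideanSpace ℝ (Fin d))}
    (hs : Bornology.IsBounded s) :
    ∃ D : PMF (Setoid s), IsDecomposition (16 * t) Δ ((2 : ℝ) ^ (-(64 * d / t ^ 2))) D := by
  set ε := Δ / (t ^ 2 * √d)
  have hd0 : 0 < √(d : ℝ) := Real.sqrt_pos.2 (by positivity)
  have hε : 0 < ε := by positivity
  have hεΔ : ε * √d ≤ Δ / t ^ 2 := by rw [div_mul_eq_mul_div, mul_div_mul_right _ _ hd0.ne']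
  have hRΔ : Δ / t ^ 2 ≤ 8 * t * Δ := by
    rw [div_le_iff₀ (by positivity)]; nlinarith [mul_le_mul_of_nonneg_left ht hΔ.le]
  obtain ⟨N, hN⟩ := exists_abs_le_of_latticePoint_mem hε (hs.cthickening (δ := 8 * t * Δ))
  let M := Fintype.piFinset fun _ : Fin d => Finset.Icc (-N : ℤ) N
  have hM : ∀ x ∈ s, ∀ k, dist (latticePoint ε k) x ≤ 8 * t * Δ → k ∈ M := fun x hx k hk =>
    Fintype.mem_piFinset.2 fun i =>
      mem_Icc.2 (abs_le.1 (hN k (Metric.mem_cthickening_of_dist_le _ _ _ _ hx hk) i))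
  have hcover (x : EuclideanSpace ℝ (Fin d)) :
      dist (latticePoint ε (latticeIndex ε x)) x ≤ 8 * t * Δ := by
    rw [dist_comm]; linarith [dist_latticePoint_latticeIndex_le hε x]
  exact exists_isDecomposition_of_centers s M (latticePoint ε) (by linarith)
    (fun x hx => ⟨_, hM x hx _ (hcover x), hcover x⟩)
    fun x hx y _ hxy => two_rpow_mul_card_or_le_card_and hd ht htd hΔ hε hεΔ M hxy (hM x hx)

/-- There are universal constants `C, C' ≥ 1` such that for every `d ≥ 2`
and every `2 ≤ t ≤ √(2d/ln d)`, every finite subset of `ℝ^d` is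
`(C·t, 2^{-C'·d/t²})`-decomposable. -/
theorem euclidean_low_dim_decomposable :
    ∃ (C C' : ℝ), 1 ≤ C ∧ 1 ≤ C' ∧
      ∀ (d : ℕ), 2 ≤ d →
      ∀ t : ℝ, 2 ≤ t → t ≤ Real.sqrt (2 * d / Real.log d) →
      ∀ s : Finset (EuclideanSpace ℝ (Fin d)),
        IsDecomposable ↥s (C * t) ((2 : ℝ) ^ (-(C' * d / t ^ 2))) := by
  refine ⟨16, 64, by norm_num, by norm_num, fun d hd t ht htd s Δ hΔ => ?_⟩
  have hlog : 0 < Real.log d := Real.log_pos (by exact_mod_cast hd)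
  have htd' : t ^ 2 * Real.log d ≤ 2 * d := by
    rwa [← le_div_iff₀ hlog, ← Real.le_sqrt (by linarith) (by positivity)]
  exact exists_isDecomposition_euclidean hd ht htd' hΔ s.finite_toSet.isBounded
end
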